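/- Let Φ be an invertible N×N complex matrix whose induced Euclidean operator norm satisfies ‖Φ x‖₂ ≤ ‖x‖₂ for every vector x, let Λ be the diagonal matrix with diagonal entries λ_1, …, λ_N ∈ ℂ satisfying |λ_k| ≤ 1 for all k, and set A = Φ Λ Φ⁻¹. Let ε_m ≥ 0 and let e, ρ : ℕ → (Fin N → ℂ) satisfy e^{n+1} = A e^n + ρ^n for all n, with ‖ρ^n‖₂ ≤ ε_m for all n ≥ m. Then for every n ≥ m, ‖e^n‖₂ ≤ ‖Φ⁻¹‖_F · ( ‖e^m‖₂ + (n − m)·ε_m ), where ‖·‖_F denotes the Frobenius norm. -/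

import Mathlib

/-- The Euclidean (ℓ²) norm on `Fin N → ℂ`. -/
noncomputable def l2norm {N : ℕ} (v : Fin N → ℂ) : ℝ :=
  ‖(WithLp.equiv 2 (Fin N → ℂ)).symm v‖

/-- The Frobenius norm of a square complex matrix. -/
noncomputable def frobeniusNorm {N : ℕ} (M : Matrix (Fin N) (Fin N) ℂ) : ℝ :=
  Real.sqrt (∑ i, ∑ j, ‖M i j‖ ^ 2)

/-!
In the coordinates `f = Φ⁻¹ e` of the DMD modes the recurrence reads
`f^{n+1} = Λ f^n + Φ⁻¹ ρ^n`. Since `Λ` is an ℓ²-contraction and `‖Φ⁻¹ ρ^n‖₂ ≤ ‖Φ⁻¹‖_F ε_m`,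
`‖f^n‖₂` grows by at most `‖Φ⁻¹‖_F ε_m` per step. Going back, `‖e^n‖₂ = ‖Φ f^n‖₂ ≤ ‖f^n‖₂`
and `‖f^m‖₂ ≤ ‖Φ⁻¹‖_F ‖e^m‖₂`.
-/

open Matrix

lemma l2norm_add_le {N : ℕ} (u v : Fin N → ℂ) : l2norm (u + v) ≤ l2norm u + l2norm v :=
  norm_add_le _ _

section Frobenius

attribute [local instance] frobeniusNormedAddCommGroup

lemma frobeniusNorm_eq_norm {N : ℕ} (M : Matrix (Fin N) (Fin N) ℂ) : frobeniusNorm M = ‖M‖ := by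
  rw [frobenius_norm_def, frobeniusNorm, Real.sqrt_eq_rpow]
  norm_cast

lemma l2norm_mulVec_le_frobeniusNorm {N : ℕ} (M : Matrix (Fin N) (Fin N) ℂ) (x : Fin N → ℂ) :
    l2norm (M *ᵥ x) ≤ frobeniusNorm M * l2norm x := by
  have h := frobenius_norm_mul M (replicateCol Unit x)
  rwa [← replicateCol_mulVec, frobenius_norm_replicateCol,
    frobenius_norm_replicateCol, ← frobeniusNorm_eq_norm] at h

end Frobenius

open scoped Matrix.Norms.L2Operator in
lemma l2norm_diagonal_mulVec_le {N : ℕ} (lam x : Fin N → ℂ) :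
    l2norm (diagonal lam *ᵥ x) ≤ ‖lam‖ * l2norm x := by
  simpa [l2norm] using l2_opNorm_mulVec (diagonal lam) (WithLp.toLp 2 x)

lemma inv_mulVec_succ_of_conj_recurrence {n R : Type*} [Fintype n] [DecidableEq n] [CommRing R]
    {Φ D : Matrix n n R} (hΦ : IsUnit Φ) {e ρ : ℕ → n → R}
    (hrec : ∀ k, e (k + 1) = (Φ * D * Φ⁻¹) *ᵥ e k + ρ k) (k : ℕ) :
    Φ⁻¹ *ᵥ e (k + 1) = D *ᵥ (Φ⁻¹ *ᵥ e k) + Φ⁻¹ *ᵥ ρ k := by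
  have hconj : Φ⁻¹ * (Φ * D * Φ⁻¹) = D * Φ⁻¹ := by
    rw [← Matrix.mul_assoc, ← Matrix.mul_assoc, nonsing_inv_mul Φ ((isUnit_iff_isUnit_det Φ).mp hΦ),
      Matrix.one_mul]
  rw [hrec, mulVec_add, mulVec_mulVec, hconj, mulVec_mulVec]

lemma le_add_mul_of_succ_le_add {u : ℕ → ℝ} {δ : ℝ} {m : ℕ}
    (hu : ∀ k, m ≤ k → u (k + 1) ≤ u k + δ) {n : ℕ} (hn : m ≤ n) :
    u n ≤ u m + (n - m : ℕ) * δ := by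
  induction n, hn using Nat.le_induction with
  | base => simp
  | succ k hk ih =>
    calc u (k + 1) ≤ u m + (k - m : ℕ) * δ + δ := by linarith [hu k hk]
      _ = u m + (k + 1 - m : ℕ) * δ := by
        rw [Nat.sub_add_comm hk]; push_cast; ring

theorem dmd_error_bound_frobenius_general {N : ℕ} (Φ : Matrix (Fin N) (Fin N) ℂ)
    (hΦ : IsUnit Φ)
    (hΦnorm : ∀ x : Fin N → ℂ, l2norm (Φ.mulVec x) ≤ l2norm x)
    (lam : Fin N → ℂ) (hlam : ∀ k, ‖lam k‖ ≤ 1)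
    (A : Matrix (Fin N) (Fin N) ℂ)
    (hA : A = Φ * Matrix.diagonal lam * Φ⁻¹)
    (εm : ℝ) (m : ℕ)
    (e ρ : ℕ → (Fin N → ℂ))
    (hrec : ∀ n, e (n + 1) = A.mulVec (e n) + ρ n)
    (hρ : ∀ n, m ≤ n → l2norm (ρ n) ≤ εm) :
    ∀ n, m ≤ n →
      l2norm (e n) ≤ frobeniusNorm Φ⁻¹ * (l2norm (e m) + (n - m : ℕ) * εm) := by
  intro n hn
  subst hA
  have hlam_le : ‖lam‖ ≤ 1 := (pi_norm_le_iff_of_nonneg zero_le_one).mpr hlam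
  have hstep : ∀ k, m ≤ k → l2norm (Φ⁻¹ *ᵥ e (k + 1)) ≤
      l2norm (Φ⁻¹ *ᵥ e k) + frobeniusNorm Φ⁻¹ * εm := fun k hk =>
    calc l2norm (Φ⁻¹ *ᵥ e (k + 1))
        ≤ l2norm (diagonal lam *ᵥ (Φ⁻¹ *ᵥ e k)) + l2norm (Φ⁻¹ *ᵥ ρ k) := by
          rw [inv_mulVec_succ_of_conj_recurrence hΦ hrec]; exact l2norm_add_le _ _
      _ ≤ l2norm (Φ⁻¹ *ᵥ e k) + frobeniusNorm Φ⁻¹ * εm := by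
          gcongr
          · exact (l2norm_diagonal_mulVec_le _ _).trans
              (mul_le_of_le_one_left (norm_nonneg _) hlam_le)
          · exact (l2norm_mulVec_le_frobeniusNorm _ _).trans
              (mul_le_mul_of_nonneg_left (hρ k hk) (Real.sqrt_nonneg _))
  have hΦΦinv : Φ * Φ⁻¹ = 1 := mul_nonsing_inv Φ ((isUnit_iff_isUnit_det Φ).mp hΦ)
  calc l2norm (e n) = l2norm (Φ *ᵥ (Φ⁻¹ *ᵥ e n)) := by
        rw [mulVec_mulVec, hΦΦinv, one_mulVec]
    _ ≤ l2norm (Φ⁻¹ *ᵥ e n) := hΦnorm _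
    _ ≤ l2norm (Φ⁻¹ *ᵥ e m) + (n - m : ℕ) * (frobeniusNorm Φ⁻¹ * εm) :=
        le_add_mul_of_succ_le_add (u := fun k => l2norm (Φ⁻¹ *ᵥ e k)) hstep hn
    _ ≤ frobeniusNorm Φ⁻¹ * l2norm (e m) + (n - m : ℕ) * (frobeniusNorm Φ⁻¹ * εm) := by
        gcongr; exact l2norm_mulVec_le_frobeniusNorm _ _
    _ = frobeniusNorm Φ⁻¹ * (l2norm (e m) + (n - m : ℕ) * εm) := by ring

/-- The error bound for the DMD reduced-order model (Lu & Tartakovsky 2019):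
if the DMD modes `Φ` have Euclidean operator norm at most 1, the DMD eigenvalues
have modulus at most 1, and the error sequence evolves by `A = Φ Λ Φ⁻¹` up to
one-step residuals of size at most `ε_m`, then for `n ≥ m`,
`‖e^n‖₂ ≤ ‖Φ⁻¹‖_F (‖e^m‖₂ + (n − m) ε_m)`. -/
theorem dmd_error_bound_frobenius {N : ℕ} (Φ : Matrix (Fin N) (Fin N) ℂ)
    (hΦ : IsUnit Φ)
    (hΦnorm : ∀ x : Fin N → ℂ, l2norm (Φ.mulVec x) ≤ l2norm x)
    (lam : Fin N → ℂ) (hlam : ∀ k, ‖lam k‖ ≤ 1)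
    (A : Matrix (Fin N) (Fin N) ℂ)
    (hA : A = Φ * Matrix.diagonal lam * Φ⁻¹)
    (εm : ℝ) (hεm : 0 ≤ εm) (m : ℕ)
    (e ρ : ℕ → (Fin N → ℂ))
    (hrec : ∀ n, e (n + 1) = A.mulVec (e n) + ρ n)
    (hρ : ∀ n, m ≤ n → l2norm (ρ n) ≤ εm) :
    ∀ n, m ≤ n →
      l2norm (e n) ≤ frobeniusNorm Φ⁻¹ * (l2norm (e m) + (n - m : ℕ) * εm) :=
  dmd_error_bound_frobenius_general Φ hΦ hΦnorm lam hlam A hA εm m e ρ hrec hρ
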